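/- For every m ∈ ℕ, the coefficients A_{m,k} := (−1)^{k+1} sinc^{(2m−1)}(1/2 − k) satisfy the closed-form A_{m,k} = ((2m−1)!/(π (k − 1/2)^{2m})) Σ_{j=0}^{m−1} ((−1)^j/(2j)!) (π(k − 1/2))^{2j} for all k ∈ ℤ, where sinc^{(2m−1)} denotes the (2m−1)-st derivative of sinc(t) = sin(πt)/(πt). -/

import Mathlib

/-!
Away from `0`, `sinc t = π⁻¹ · sin (π t) · t⁻¹`, so Leibniz' rule writes `sinc⁽ⁿ⁾ t` as a sum over
`i ≤ n` of `C(n, i) πⁱ sin⁽ⁱ⁾(π t) · (-1)ⁿ⁻ⁱ (n - i)! / tⁿ⁻ⁱ⁺¹`. At `t = 1/2 - k` the odd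
derivatives `± cos (π t)` vanish and the even ones are `± (-1)ᵏ`, so for `n = 2m - 1` only the
terms `i = 2j`, `j < m`, survive, and each of them is the `j`-th term of the closed form.
-/

open Real Filter Topology

/-- `sinc t = sin(πt)/(πt)`, `sinc 0 = 1`. -/
noncomputable def sinc (t : ℝ) : ℝ :=
  if t = 0 then 1 else Real.sin (Real.pi * t) / (Real.pi * t)

open Finset Nat

lemma sinc_eventuallyEq {t : ℝ} (ht : t ≠ 0) :
    _root_.sinc =ᶠ[𝓝 t] fun s => π⁻¹ * (sin (π * s) * s⁻¹) :=
  (eventually_ne_nhds ht).mono fun s hs => by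
    rw [_root_.sinc, if_neg hs]
    field_simp

noncomputable def sincDerivTerm (n i : ℕ) (t : ℝ) : ℝ :=
  n.choose i * (π ^ i * iteratedDeriv i sin (π * t)) *
    ((-1) ^ (n - i) * (n - i)! / t ^ (n - i + 1))

lemma iteratedDeriv_sinc_of_ne_zero (n : ℕ) {t : ℝ} (ht : t ≠ 0) :
    iteratedDeriv n _root_.sinc t = π⁻¹ * ∑ i ∈ range (n + 1), sincDerivTerm n i t := by
  rw [(sinc_eventuallyEq ht).iteratedDeriv_eq, iteratedDeriv_const_mul_field,
    iteratedDeriv_fun_mul (f := fun s => sin (π * s)) (by fun_prop) (contDiffAt_inv ℝ ht)]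
  congr 1
  refine sum_congr rfl fun i _ => ?_
  rw [sincDerivTerm, iteratedDeriv_comp_const_mul contDiff_sin,
    iteratedDeriv_eq_iterate (f := Inv.inv), iter_deriv_inv,
    show (-1 - (n - i : ℕ) : ℤ) = -(n - i + 1 : ℕ) by push_cast; ring,
    zpow_neg, zpow_natCast, div_eq_mul_inv]

lemma sum_range_two_mul_of_odd_eq_zero {M : Type*} [AddCommMonoid M] (f : ℕ → M) (m : ℕ)
    (h : ∀ j, f (2 * j + 1) = 0) :
    ∑ i ∈ range (2 * m), f i = ∑ j ∈ range m, f (2 * j) := by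
  induction m with
  | zero => simp
  | succ m ih => rw [mul_add_one, sum_range_succ, sum_range_succ, ih, h, add_zero, sum_range_succ]

lemma int_sub_half_ne_zero (k : ℤ) : (k : ℝ) - 1 / 2 ≠ 0 := by
  have h2k : 2 * k - 1 ≠ 0 := by omega
  rw [show (k : ℝ) - 1 / 2 = ((2 * k - 1 : ℤ) : ℝ) / 2 by push_cast; ring]
  exact div_ne_zero (mod_cast h2k) two_ne_zero

lemma sin_pi_mul_half_sub_int (k : ℤ) : sin (π * (1 / 2 - k)) = (-1) ^ k := by
  rw [← cos_int_mul_pi, ← cos_pi_div_two_sub]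
  congr 1
  ring

lemma cos_pi_mul_half_sub_int (k : ℤ) : cos (π * (1 / 2 - k)) = 0 := by
  rw [← sin_pi_div_two_sub, ← sin_int_mul_pi k]
  congr 1
  ring

lemma sincDerivTerm_odd_half_sub_int (n j : ℕ) (k : ℤ) :
    sincDerivTerm n (2 * j + 1) (1 / 2 - k) = 0 := by
  simp only [sincDerivTerm, iteratedDeriv_odd_sin, Pi.mul_apply, cos_pi_mul_half_sub_int,
    mul_zero, zero_mul]

lemma neg_one_zpow_mul_sincDerivTerm_even_half_sub_int {m j : ℕ} (hjm : j < m) (k : ℤ) :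
    (-1 : ℝ) ^ (k + 1) * (π⁻¹ * sincDerivTerm (2 * m - 1) (2 * j) (1 / 2 - k)) =
      (2 * m - 1)! / (π * ((k : ℝ) - 1 / 2) ^ (2 * m)) *
        ((-1) ^ j / (2 * j)! * (π * ((k : ℝ) - 1 / 2)) ^ (2 * j)) := by
  have hs := int_sub_half_ne_zero k
  have hsign : (-1 : ℝ) ^ (k + 1) * (-1) ^ k = -1 := by
    rw [zpow_add_one₀ (by norm_num), mul_right_comm, ← mul_zpow]
    norm_num
  have hodd : (-1 : ℝ) ^ (2 * m - 1 - 2 * j) = -1 := Odd.neg_one_pow ⟨m - j - 1, by omega⟩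
  have hpow : (1 / 2 - k : ℝ) ^ (2 * m - 1 - 2 * j + 1) =
      ((k : ℝ) - 1 / 2) ^ (2 * m) / ((k : ℝ) - 1 / 2) ^ (2 * j) := by
    rw [eq_div_iff (pow_ne_zero _ hs), show 2 * m - 1 - 2 * j + 1 = 2 * (m - j) by omega,
      pow_mul, ← neg_sub, neg_sq, ← pow_mul, ← pow_add]
    congr 1
    omega
  have hchoose :
      ((2 * m - 1)! : ℝ) = (2 * m - 1).choose (2 * j) * (2 * j)! * (2 * m - 1 - 2 * j)! :=
    mod_cast (Nat.choose_mul_factorial_mul_factorial (by omega : 2 * j ≤ 2 * m - 1)).symm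
  simp only [sincDerivTerm, iteratedDeriv_even_sin, Pi.mul_apply, Pi.pow_apply, Pi.neg_apply,
    Pi.one_apply, sin_pi_mul_half_sub_int, hpow, hodd, hchoose]
  generalize (k : ℝ) - 1 / 2 = s at hs ⊢
  field_simp
  linear_combination (-((2 * m - 1).choose (2 * j) * π ^ (2 * j) * s ^ (2 * j) : ℝ)) * hsign

theorem A_coefficient_closed_form (m : ℕ) (hm : 1 ≤ m) (k : ℤ) :
    (-1 : ℝ) ^ (k + 1) * iteratedDeriv (2 * m - 1) _root_.sinc (1 / 2 - (k : ℝ)) =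
      ((2 * m - 1).factorial : ℝ) / (Real.pi * ((k : ℝ) - 1 / 2) ^ (2 * m)) *
        ∑ j ∈ Finset.range m,
          ((-1 : ℝ) ^ j / ((2 * j).factorial : ℝ)) *
            (Real.pi * ((k : ℝ) - 1 / 2)) ^ (2 * j) := by
  have ht : (1 / 2 - k : ℝ) ≠ 0 := by
    rw [← neg_sub]
    exact neg_ne_zero.mpr (int_sub_half_ne_zero k)
  rw [iteratedDeriv_sinc_of_ne_zero _ ht, Nat.sub_add_cancel (by omega : 1 ≤ 2 * m),
    sum_range_two_mul_of_odd_eq_zero _ _ fun j => sincDerivTerm_odd_half_sub_int _ j k,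
    mul_sum, mul_sum, mul_sum]
  exact sum_congr rfl fun j hj =>
    neg_one_zpow_mul_sincDerivTerm_even_half_sub_int (mem_range.mp hj) k
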